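/- The union ⋃_{s>0} B_s of the Bruno-s classes is invariant under inversion ω ↦ 1/ω: if an irrational ω ∈ (0,1) satisfies the Bruno-s condition limsup_k (∑_{j=0}^k β_{j-1}·log(1/ω_j) + s·log β_{k-1}) < ∞, then ω' = 1/ω (equivalently its fractional part) satisfies the Bruno-s' condition for some s' > 0 (one may take s' = s/ω₀ where ω₀ = ω). -/

import Mathlib

/-- The Gauss map `x ↦ {1/x}`. -/
noncomputable def gaussMap (x : ℝ) : ℝ := Int.fract x⁻¹

/-- Gauss map iterates starting from the fractional part:
`ω_0 = {ω}`, `ω_{j+1} = {1/ω_j}`. -/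
noncomputable def gIter (ω : ℝ) (n : ℕ) : ℝ := gaussMap^[n] (Int.fract ω)

/-- `betaPred ω k = β_{k-1}(ω) = ∏_{j=0}^{k-1} ω_j`, with `betaPred ω 0 = β_{-1} = 1`. -/
noncomputable def betaPred (ω : ℝ) (k : ℕ) : ℝ := ∏ j ∈ Finset.range k, gIter ω j

/-- The Bruno-`s` condition:
`limsup_k (∑_{j=0}^k β_{j-1} log(1/ω_j) + s log β_{k-1}) < +∞`. -/
def BrunoB (s ω : ℝ) : Prop :=
  Filter.IsBoundedUnder (· ≤ ·) Filter.atTop (fun k : ℕ =>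
    (∑ j ∈ Finset.range (k + 1), betaPred ω j * Real.log (gIter ω j)⁻¹)
      + s * Real.log (betaPred ω k))

lemma irr_fract {x : ℝ} (h : Irrational x) : Irrational (Int.fract x) := by
  unfold Int.fract
  exact Irrational.sub_intCast h _

lemma irr_gIter {ω : ℝ} (h : Irrational ω) : ∀ n, Irrational (gIter ω n) := by
  intro n
  induction n with
  | zero => exact irr_fract h
  | succ n ih =>
      have : gIter ω (n+1) = gaussMap (gIter ω n) := Function.iterate_succ_apply' _ _ _
      rw [this]
      exact irr_fract ih.inv

lemma fract_pos_of_irr {x : ℝ} (h : Irrational x) : 0 < Int.fract x :=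
  Int.fract_pos.mpr (h.ne_int _)

lemma gIter_pos {ω : ℝ} (h : Irrational ω) (n : ℕ) : 0 < gIter ω n := by
  cases n with
  | zero => exact fract_pos_of_irr h
  | succ m =>
      have : gIter ω (m+1) = gaussMap (gIter ω m) := Function.iterate_succ_apply' _ _ _
      rw [this]
      exact fract_pos_of_irr (irr_gIter h m).inv

lemma gIter_lt_one {ω : ℝ} (n : ℕ) : gIter ω n < 1 := by
  have : gIter ω n = Int.fract (match n with
    | 0 => ω
    | (m+1) => (gIter ω m)⁻¹) := by
    cases n with
    | zero => rfl
    | succ m => exact Function.iterate_succ_apply' _ _ _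
  rw [this]
  exact Int.fract_lt_one _

lemma betaPred_pos {ω : ℝ} (h : Irrational ω) (k : ℕ) : 0 < betaPred ω k :=
  Finset.prod_pos fun j _ => gIter_pos h j

lemma gIter_inv {ω : ℝ} (h0 : 0 < ω) (h1 : ω < 1) (n : ℕ) :
    gIter ω⁻¹ n = gIter ω (n + 1) := by
  unfold gIter
  rw [Function.iterate_succ_apply, Int.fract_eq_self.2 ⟨h0.le, h1⟩]
  rfl

lemma betaPred_inv {ω : ℝ} (h0 : 0 < ω) (h1 : ω < 1) (k : ℕ) :
    betaPred ω (k + 1) = ω * betaPred ω⁻¹ k := by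
  unfold betaPred
  rw [Finset.prod_range_succ']
  have h00 : gIter ω 0 = ω := by
    unfold gIter
    simp [Int.fract_eq_self.2 ⟨h0.le, h1⟩]
  rw [h00, mul_comm]
  congr 1
  exact Finset.prod_congr rfl fun j _ => (gIter_inv h0 h1 j).symm

/-- Invariance of `⋃_{s>0} B_s` under inversion `ω ↦ 1/ω`:
if `ω ∈ (0,1)` is irrational and satisfies the Bruno-`s` condition,
then `1/ω` satisfies the Bruno-`s'` condition with `s' = s/ω > 0`. -/
theorem stmt10 (s ω : ℝ) (hs : 0 < s) (hω : Irrational ω) (h0 : 0 < ω) (h1 : ω < 1)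
    (h : BrunoB s ω) : 0 < s / ω ∧ BrunoB (s / ω) ω⁻¹ := by
  refine ⟨div_pos hs h0, ?_⟩
  set F : ℕ → ℝ := fun k =>
    (∑ j ∈ Finset.range (k + 1), betaPred ω j * Real.log (gIter ω j)⁻¹)
      + s * Real.log (betaPred ω k) with hF
  set C : ℝ := ω⁻¹ * Real.log ω - s / ω * Real.log ω with hC
  have key : ∀ k : ℕ,
      (∑ j ∈ Finset.range (k + 1), betaPred ω⁻¹ j * Real.log (gIter ω⁻¹ j)⁻¹)
        + (s / ω) * Real.log (betaPred ω⁻¹ k)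
      = ω⁻¹ * F (k + 1) + C := by
    intro k
    have hβ : ∀ j, betaPred ω⁻¹ j = ω⁻¹ * betaPred ω (j + 1) := by
      intro j
      rw [betaPred_inv h0 h1, ← mul_assoc, inv_mul_cancel₀ h0.ne', one_mul]
    have hsum : (∑ j ∈ Finset.range (k + 1), betaPred ω⁻¹ j * Real.log (gIter ω⁻¹ j)⁻¹)
        = ω⁻¹ * ∑ j ∈ Finset.range (k + 1),
            betaPred ω (j + 1) * Real.log (gIter ω (j + 1))⁻¹ := by
      rw [Finset.mul_sum]
      refine Finset.sum_congr rfl fun j _ => ?_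
      rw [hβ j, gIter_inv h0 h1, mul_assoc]
    have hlog : Real.log (betaPred ω⁻¹ k) = Real.log (betaPred ω (k + 1)) - Real.log ω := by
      rw [betaPred_inv h0 h1, Real.log_mul h0.ne' (betaPred_pos hω.inv k).ne']
      ring
    have hsplit : (∑ j ∈ Finset.range (k + 1 + 1), betaPred ω j * Real.log (gIter ω j)⁻¹)
        = (∑ j ∈ Finset.range (k + 1), betaPred ω (j + 1) * Real.log (gIter ω (j + 1))⁻¹)
          + betaPred ω 0 * Real.log (gIter ω 0)⁻¹ :=
      Finset.sum_range_succ' _ _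
    have h00 : gIter ω 0 = ω := by
      unfold gIter; simp [Int.fract_eq_self.2 ⟨h0.le, h1⟩]
    have hβ0 : betaPred ω 0 = 1 := by simp [betaPred]
    simp only [hF, hC]
    rw [hsum, hlog, hsplit, h00, hβ0, one_mul, Real.log_inv]
    field_simp
    ring
  obtain ⟨b, hb⟩ := h
  rw [Filter.eventually_map, Filter.eventually_atTop] at hb
  obtain ⟨N, hN⟩ := hb
  refine ⟨ω⁻¹ * b + C, ?_⟩
  rw [Filter.eventually_map, Filter.eventually_atTop]
  refine ⟨N, fun k hk => ?_⟩
  have hFk : F (k + 1) ≤ b := hN (k + 1) (le_trans hk (Nat.le_succ k))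
  calc (∑ j ∈ Finset.range (k + 1), betaPred ω⁻¹ j * Real.log (gIter ω⁻¹ j)⁻¹)
        + (s / ω) * Real.log (betaPred ω⁻¹ k)
      = ω⁻¹ * F (k + 1) + C := key k
    _ ≤ ω⁻¹ * b + C := by
        have := mul_le_mul_of_nonneg_left hFk (inv_pos.mpr h0).le
        linarith
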